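/- arXiv:1006.1148 — 2 statements merged into one kernel-verified Lean document; each statement's English description precedes it below -/
import Mathlib

section
/- Let f, g, h : [0,T] → ℝ be continuous with f, h positive. Then the property that f(t₂) - f(t₁) ≤ ∫_{t₁}^{t₂} (g(t) f(t) + h(t)) dt for all 0 ≤ t₁ < t₂ ≤ T holds if and only if f(t₂)² - f(t₁)² ≤ 2 ∫_{t₁}^{t₂} (g(t) f(t)² + h(t) f(t)) dt for all 0 ≤ t₁ < t₂ ≤ T. -/
/-!
Both inequalities say that a lower right Dini derivative is bounded by the integrand:
`φ t₂ - φ t₁ ≤ ∫_{t₁}^{t₂} ψ` on `[a, b]` holds iff `liminf_{z → x⁺} slope φ x z ≤ ψ x`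
on `[a, b)`.
Since `slope (f²) x z = slope f x z * (f z + f x)` and `f z + f x → 2 f x > 0`, the Dini bound
`g f + h` for `f` is equivalent to the Dini bound `2 f (g f + h) = 2 (g f² + h f)` for `f²`.
-/

open Set Filter Topology intervalIntegral

section Frequently

variable {α : Type*} {l : Filter α} {s u : α → ℝ} {c L : ℝ}

theorem frequently_mul_lt_of_frequently_lt (hu : Tendsto u l (𝓝 L)) (hL : 0 < L)
    (hs : ∀ r, c < r → ∃ᶠ z in l, s z < r) :
    ∀ r, L * c < r → ∃ᶠ z in l, s z * u z < r := by
  intro r hr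
  obtain ⟨r₁, hcr₁, hr₁⟩ := exists_between ((lt_div_iff₀' hL).2 hr)
  have hu_pos : ∀ᶠ z in l, 0 < u z := hu.eventually_const_lt hL
  have hu_lt : ∀ᶠ z in l, r₁ * u z < r :=
    (hu.const_mul r₁).eventually_lt_const (by rwa [mul_comm, ← lt_div_iff₀' hL])
  refine ((hs r₁ hcr₁).and_eventually (hu_pos.and hu_lt)).mono ?_
  rintro z ⟨hsz, huz, hr₁z⟩
  exact (mul_lt_mul_of_pos_right hsz huz).trans hr₁z

theorem frequently_lt_iff_frequently_mul_lt (hu : Tendsto u l (𝓝 L)) (hL : 0 < L) :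
    (∀ r, c < r → ∃ᶠ z in l, s z < r) ↔
      ∀ r, L * c < r → ∃ᶠ z in l, s z * u z < r := by
  refine ⟨frequently_mul_lt_of_frequently_lt hu hL, fun h r hr => ?_⟩
  have hinv := frequently_mul_lt_of_frequently_lt (hu.inv₀ hL.ne') (inv_pos.2 hL) h r
    (by rwa [inv_mul_cancel_left₀ hL.ne'])
  have hu_ne : ∀ᶠ z in l, u z ≠ 0 := hu.eventually_ne hL.ne'
  refine (hinv.and_eventually hu_ne).mono fun z ⟨hz, huz⟩ => ?_
  rwa [mul_inv_cancel_right₀ huz] at hz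

end Frequently

theorem slope_sq (φ : ℝ → ℝ) (x z : ℝ) :
    slope (fun t => φ t ^ 2) x z = slope φ x z * (φ z + φ x) := by
  simp only [slope_def_field]
  ring

section Dini

variable {φ ψ : ℝ → ℝ} {a b : ℝ}

theorem hasDerivWithinAt_integral_Ici (hψ : ContinuousOn ψ (Icc a b)) {x : ℝ}
    (hx : x ∈ Ico a b) : HasDerivWithinAt (fun u => ∫ t in a..u, ψ t) (ψ x) (Ici x) x := by
  have hIcc : Icc a b ∈ 𝓝[>] x := Icc_mem_nhdsGT_of_mem hx
  refine integral_hasDerivWithinAt_right (t := Ioi x) ?_ ?_ ?_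
  · exact (hψ.mono (Icc_subset_Icc_right hx.2.le)).intervalIntegrable_of_Icc hx.1
  · exact (hψ.stronglyMeasurableAtFilter_nhdsWithin measurableSet_Icc x).filter_mono
      (nhdsWithin_le_of_mem hIcc)
  · exact (hψ x (Ico_subset_Icc_self hx)).mono_of_mem_nhdsWithin hIcc

theorem eventually_slope_lt_of_sub_le_integral (hψ : ContinuousOn ψ (Icc a b))
    (hab : a < b) (h : ∀ z ∈ Ioc a b, φ z - φ a ≤ ∫ t in a..z, ψ t) :
    ∀ r, ψ a < r → ∀ᶠ z in 𝓝[>] a, slope φ a z < r := by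
  intro r hr
  have hderiv := (hasDerivWithinAt_iff_tendsto_slope' (lt_irrefl a)).1
    (hasDerivWithinAt_integral_Ici hψ (left_mem_Ico.2 hab)).Ioi_of_Ici
  filter_upwards [hderiv.eventually_lt_const hr, Ioo_mem_nhdsGT hab] with z hz hzab
  calc slope φ a z = (φ z - φ a) / (z - a) := slope_def_field φ a z
    _ ≤ (∫ t in a..z, ψ t) / (z - a) :=
      div_le_div_of_nonneg_right (h z (Ioo_subset_Ioc_self hzab)) (sub_pos.2 hzab.1).le
    _ < r := by simpa [slope_def_field] using hz

theorem sub_le_integral_of_frequently_slope_lt (hφ : ContinuousOn φ (Icc a b))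
    (hψ : ContinuousOn ψ (Icc a b)) (hab : a ≤ b)
    (hdini : ∀ x ∈ Ico a b, ∀ r, ψ x < r → ∃ᶠ z in 𝓝[>] x, slope φ x z < r) :
    φ b - φ a ≤ ∫ t in a..b, ψ t := by
  have hprim : ContinuousOn (fun u => ∫ t in a..u, ψ t) (Icc a b) := by
    have hint : MeasureTheory.IntegrableOn ψ (uIcc a b) := by
      rw [uIcc_of_le hab]
      exact hψ.integrableOn_Icc
    simpa only [uIcc_of_le hab] using continuousOn_primitive_interval hint
  have hB' : ∀ x ∈ Ico a b,
      HasDerivWithinAt (fun u => φ a + ∫ t in a..u, ψ t) (ψ x) (Ici x) x :=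
    fun x hx => (hasDerivWithinAt_integral_Ici hψ hx).const_add (φ a)
  have hle := image_le_of_liminf_slope_right_le_deriv_boundary hφ
    (B := fun u => φ a + ∫ t in a..u, ψ t) (by rw [integral_same, add_zero])
    (continuousOn_const.add hprim) hB' hdini (right_mem_Icc.2 hab)
  linarith

theorem sub_le_integral_iff_frequently_slope_lt (hφ : ContinuousOn φ (Icc a b))
    (hψ : ContinuousOn ψ (Icc a b)) :
    (∀ t₁ t₂ : ℝ, a ≤ t₁ → t₁ < t₂ → t₂ ≤ b → φ t₂ - φ t₁ ≤ ∫ t in t₁..t₂, ψ t) ↔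
      ∀ x ∈ Ico a b, ∀ r, ψ x < r → ∃ᶠ z in 𝓝[>] x, slope φ x z < r := by
  constructor
  · intro h x hx r hr
    exact (eventually_slope_lt_of_sub_le_integral (hψ.mono (Icc_subset_Icc_left hx.1)) hx.2
      (fun z hz => h x z hx.1 hz.1 hz.2) r hr).frequently
  · intro h t₁ t₂ ht₁ ht₁₂ ht₂
    have hsub : Icc t₁ t₂ ⊆ Icc a b := Icc_subset_Icc ht₁ ht₂
    exact sub_le_integral_of_frequently_slope_lt (hφ.mono hsub) (hψ.mono hsub) ht₁₂.le
      fun x hx => h x ⟨ht₁.trans hx.1, hx.2.trans_le ht₂⟩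

end Dini

theorem frequently_slope_lt_iff_frequently_slope_sq_lt {φ : ℝ → ℝ} {x c : ℝ}
    (hφ : ContinuousWithinAt φ (Ioi x) x) (hx : 0 < φ x) :
    (∀ r, c < r → ∃ᶠ z in 𝓝[>] x, slope φ x z < r) ↔
      ∀ r, 2 * φ x * c < r → ∃ᶠ z in 𝓝[>] x, slope (fun t => φ t ^ 2) x z < r := by
  simp only [slope_sq]
  refine frequently_lt_iff_frequently_mul_lt ?_ (by positivity)
  simpa [two_mul] using hφ.tendsto.add (tendsto_const_nhds (x := φ x))

theorem stmt2_general (T : ℝ) (f g h : ℝ → ℝ)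
    (hf : ContinuousOn f (Icc 0 T)) (hg : ContinuousOn g (Icc 0 T))
    (hh : ContinuousOn h (Icc 0 T))
    (hfpos : ∀ t ∈ Icc (0 : ℝ) T, 0 < f t) :
    (∀ t₁ t₂ : ℝ, 0 ≤ t₁ → t₁ < t₂ → t₂ ≤ T →
        f t₂ - f t₁ ≤ ∫ t in t₁..t₂, (g t * f t + h t))
      ↔
    (∀ t₁ t₂ : ℝ, 0 ≤ t₁ → t₁ < t₂ → t₂ ≤ T →
        f t₂ ^ 2 - f t₁ ^ 2 ≤ 2 * ∫ t in t₁..t₂, (g t * f t ^ 2 + h t * f t)) := by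
  have hquad : ∀ t, 2 * (g t * f t ^ 2 + h t * f t) = 2 * f t * (g t * f t + h t) :=
    fun t => by ring
  simp only [← integral_const_mul, hquad]
  have hlin : ContinuousOn (fun t => g t * f t + h t) (Icc 0 T) := (hg.mul hf).add hh
  rw [sub_le_integral_iff_frequently_slope_lt hf hlin,
    sub_le_integral_iff_frequently_slope_lt (φ := fun t => f t ^ 2)
      (ψ := fun t => 2 * f t * (g t * f t + h t)) (hf.pow 2)
      ((continuousOn_const.mul hf).mul hlin)]
  refine forall₂_congr fun x hx => frequently_slope_lt_iff_frequently_slope_sq_lt ?_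
    (hfpos x (Ico_subset_Icc_self hx))
  exact (hf x (Ico_subset_Icc_self hx)).mono_of_mem_nhdsWithin (Icc_mem_nhdsGT_of_mem hx)

/-- For continuous `f, g, h : [0,T] → ℝ` with `f, h` positive, the linear Grönwall-type
integral inequality `f(t₂) - f(t₁) ≤ ∫_{t₁}^{t₂} (g f + h)` for all `0 ≤ t₁ < t₂ ≤ T`
holds iff the quadratic version `f(t₂)² - f(t₁)² ≤ 2∫_{t₁}^{t₂} (g f² + h f)` does. -/
theorem stmt2 (T : ℝ) (f g h : ℝ → ℝ)
    (hf : ContinuousOn f (Icc 0 T)) (hg : ContinuousOn g (Icc 0 T))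
    (hh : ContinuousOn h (Icc 0 T))
    (hfpos : ∀ t ∈ Icc (0 : ℝ) T, 0 < f t)
    (hhpos : ∀ t ∈ Icc (0 : ℝ) T, 0 < h t) :
    (∀ t₁ t₂ : ℝ, 0 ≤ t₁ → t₁ < t₂ → t₂ ≤ T →
        f t₂ - f t₁ ≤ ∫ t in t₁..t₂, (g t * f t + h t))
      ↔
    (∀ t₁ t₂ : ℝ, 0 ≤ t₁ → t₁ < t₂ → t₂ ≤ T →
        f t₂ ^ 2 - f t₁ ^ 2 ≤ 2 * ∫ t in t₁..t₂, (g t * f t ^ 2 + h t * f t)) :=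
  stmt2_general T f g h hf hg hh hfpos
end

section
/- Let U^Q(t) ∈ L²(Ω) for t ∈ [0,T] satisfy U^Q = L U'' for a fixed skew-adjoint unbounded operator L (with respect to the boundary condition), and suppose U solves ∂_t U + N(t) = −(1/ε) L U with ‖U(t)‖ + ‖N(t)‖ ≤ M uniformly. Then for any C¹ test function U' of the form U' = L U'' with ‖U''(t)‖ ≤ K₁ and ‖∂_t U''‖_{L²_t} ≤ K₂: |∫₀^T ⟨U^Q, U'⟩ dt| ≤ ε(2MK₁ + M·T·K₁ + M√T·K₂). -/
open Set intervalIntegral MeasureTheory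
open scoped RealInnerProductSpace

/-!
Skew-adjointness moves `L` onto `U^Q`, and `L U^Q = L U = -ε (∂ₜU + N)` by the equation, so
`⟪U^Q, L U''⟫ = ε ⟪∂ₜU + N, U''⟫`: the fast oscillation is traded for a factor `ε`. Integrating
by parts in time moves `∂ₜ` onto `U''`; the boundary terms cost `2MK₁`, the `N`-term `MTK₁`, and
Cauchy–Schwarz in time bounds `∫ ⟪U, ∂ₜU''⟫` by `M √T K₂`.
-/

theorem integral_le_sqrt_mul_sqrt_integral_sq {g : ℝ → ℝ} {a b : ℝ} (hab : a ≤ b)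
    (hg₀ : ∀ t ∈ Icc a b, 0 ≤ g t) (hg : ContinuousOn g (Icc a b)) :
    ∫ t in a..b, g t ≤ √(b - a) * √(∫ t in a..b, g t ^ 2) := by
  have hmeas : AEStronglyMeasurable g (volume.restrict (Ioc a b)) :=
    (hg.mono Ioc_subset_Icc_self).aestronglyMeasurable measurableSet_Ioc
  obtain ⟨C, hC⟩ := isCompact_Icc.exists_bound_of_continuousOn hg
  have hg₂ : MemLp g (ENNReal.ofReal 2) (volume.restrict (Ioc a b)) :=
    MemLp.of_bound hmeas C <| (ae_restrict_iff' measurableSet_Ioc).2 <|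
      .of_forall fun t ht => hC t (Ioc_subset_Icc_self ht)
  have hholder := integral_mul_le_Lp_mul_Lq_of_nonneg Real.HolderConjugate.two_two
    (f := fun _ => (1 : ℝ)) (.of_forall fun _ => zero_le_one)
    ((ae_restrict_iff' measurableSet_Ioc).2 <|
      .of_forall fun t ht => hg₀ t (Ioc_subset_Icc_self ht))
    (memLp_const 1) hg₂
  simpa [integral_of_le hab, Real.sqrt_eq_rpow, hab] using hholder

section InnerProductSpace

variable {H : Type*} [NormedAddCommGroup H] [InnerProductSpace ℝ H]

theorem abs_inner_le_mul_of_norm_le {x y : H} {M K : ℝ} (hx : ‖x‖ ≤ M) (hy : ‖y‖ ≤ K) :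
    |⟪x, y⟫| ≤ M * K :=
  (abs_real_inner_le_norm x y).trans <|
    mul_le_mul hx hy (norm_nonneg _) ((norm_nonneg _).trans hx)

theorem integral_inner_deriv_left_eq {u w u' w' : ℝ → H} {a b : ℝ}
    (hu : ∀ t ∈ uIcc a b, HasDerivAt u (u' t) t) (hw : ∀ t ∈ uIcc a b, HasDerivAt w (w' t) t)
    (hu'w : IntervalIntegrable (fun t => ⟪u' t, w t⟫) volume a b)
    (huw' : IntervalIntegrable (fun t => ⟪u t, w' t⟫) volume a b) :
    ∫ t in a..b, ⟪u' t, w t⟫ = ⟪u b, w b⟫ - ⟪u a, w a⟫ - ∫ t in a..b, ⟪u t, w' t⟫ := by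
  rw [eq_sub_iff_add_eq, ← integral_add hu'w huw']
  simp_rw [add_comm ⟪u' _, w _⟫]
  exact integral_eq_sub_of_hasDerivAt (fun t ht => (hu t ht).inner ℝ (hw t ht)) (huw'.add hu'w)

theorem inner_map_right_eq_smul_inner_of_skew {L : H →ₗ[ℝ] H}
    (hskew : ∀ x y : H, ⟪L x, y⟫ = -⟪x, L y⟫) {ε : ℝ} (hε : ε ≠ 0) {q u n w : H}
    (hq : L q = L u) :
    ⟪q, L w⟫ = ε * (⟪-(ε⁻¹ • L u) - n, w⟫ + ⟪n, w⟫) := by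
  rw [← inner_add_left, sub_add_cancel, inner_neg_left, real_inner_smul_left, ← hq, hskew]
  field_simp

theorem integral_inner_map_eq_smul_of_skew {L : H →ₗ[ℝ] H}
    (hskew : ∀ x y : H, ⟪L x, y⟫ = -⟪x, L y⟫) {ε : ℝ} (hε : ε ≠ 0) {a b : ℝ} (hab : a ≤ b)
    {u n q w v : ℝ → H}
    (hu : ∀ t ∈ Icc a b, HasDerivAt u (-(ε⁻¹ • L (u t)) - n t) t)
    (hq : ∀ t ∈ Icc a b, L (q t) = L (u t)) (hw : ∀ t ∈ Icc a b, HasDerivAt w (v t) t)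
    (hLu : ContinuousOn (fun t => L (u t)) (Icc a b)) (hn : ContinuousOn n (Icc a b))
    (hv : ContinuousOn v (Icc a b)) :
    ∫ t in a..b, ⟪q t, L (w t)⟫ = ε * (⟪u b, w b⟫ - ⟪u a, w a⟫
      - (∫ t in a..b, ⟪u t, v t⟫) + ∫ t in a..b, ⟪n t, w t⟫) := by
  rw [← uIcc_of_le hab] at hu hq hw hLu hn hv
  have hu_cont : ContinuousOn u (uIcc a b) := fun t ht => (hu t ht).continuousAt.continuousWithinAt
  have hw_cont : ContinuousOn w (uIcc a b) := fun t ht => (hw t ht).continuousAt.continuousWithinAt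
  have hu'w : IntervalIntegrable (fun t => ⟪-(ε⁻¹ • L (u t)) - n t, w t⟫) volume a b :=
    ((hLu.const_smul ε⁻¹).neg.sub hn).inner hw_cont |>.intervalIntegrable
  have hnw : IntervalIntegrable (fun t => ⟪n t, w t⟫) volume a b :=
    (hn.inner hw_cont).intervalIntegrable
  rw [integral_congr fun t ht =>
      inner_map_right_eq_smul_inner_of_skew hskew hε (n := n t) (hq t ht),
    intervalIntegral.integral_const_mul, integral_add hu'w hnw,
    integral_inner_deriv_left_eq hu hw hu'w (hu_cont.inner hv).intervalIntegrable]

theorem abs_integral_inner_le_mul_sqrt {u v : ℝ → H} {a b M : ℝ} (hab : a ≤ b)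
    (hu : ∀ t ∈ Icc a b, ‖u t‖ ≤ M) (hv : ContinuousOn v (Icc a b)) :
    |∫ t in a..b, ⟪u t, v t⟫| ≤ M * (√(b - a) * √(∫ t in a..b, ‖v t‖ ^ 2)) := by
  have hM : 0 ≤ M := (norm_nonneg _).trans (hu a (left_mem_Icc.2 hab))
  calc |∫ t in a..b, ⟪u t, v t⟫| ≤ ∫ t in a..b, M * ‖v t‖ := by
        rw [← Real.norm_eq_abs]
        exact norm_integral_le_of_norm_le hab
          (.of_forall fun t ht =>
            abs_inner_le_mul_of_norm_le (hu t (Ioc_subset_Icc_self ht)) le_rfl)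
          ((hv.norm.intervalIntegrable_of_Icc hab).const_mul M)
    _ = M * ∫ t in a..b, ‖v t‖ := intervalIntegral.integral_const_mul M _
    _ ≤ M * (√(b - a) * √(∫ t in a..b, ‖v t‖ ^ 2)) := by
        gcongr
        exact integral_le_sqrt_mul_sqrt_integral_sq hab (fun t _ => norm_nonneg _) hv.norm

end InnerProductSpace

theorem stmt13_general {H : Type*} [NormedAddCommGroup H] [InnerProductSpace ℝ H]
    (L : H →ₗ[ℝ] H) (hskew : ∀ x y : H, (inner ℝ (L x) y : ℝ) = -inner ℝ x (L y))
    (T ε M K₁ K₂ : ℝ) (hT : 0 ≤ T) (hε : 0 < ε) (hM : 0 ≤ M)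
    (U N UQ U'' V : ℝ → H)
    -- `U` solves `∂_t U + N = −(1/ε) L U`
    (hU : ∀ t ∈ Icc 0 T, HasDerivAt U (-(ε⁻¹ • L (U t)) - N t) t)
    (hUbd : ∀ t ∈ Icc 0 T, ‖U t‖ ≤ M) (hNbd : ∀ t ∈ Icc 0 T, ‖N t‖ ≤ M)
    -- `U^Q` has the same `L`-image as `U`
    (hQ : ∀ t ∈ Icc 0 T, L (UQ t) = L (U t))
    -- `U''` is `C¹` with derivative `V`, and the test function is `U' = L U''`
    (hU'' : ∀ t ∈ Icc 0 T, HasDerivAt U'' (V t) t)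
    (hK₁ : ∀ t ∈ Icc 0 T, ‖U'' t‖ ≤ K₁)
    (hK₂ : Real.sqrt (∫ t in (0:ℝ)..T, ‖V t‖ ^ 2) ≤ K₂)
    -- continuity (regularity) assumptions
    (hNc : ContinuousOn N (Icc 0 T))
    (hVc : ContinuousOn V (Icc 0 T))
    (hLUc : ContinuousOn (fun t => L (U t)) (Icc 0 T)) :
    |∫ t in (0:ℝ)..T, (inner ℝ (UQ t) (L (U'' t)) : ℝ)|
      ≤ ε * (2 * M * K₁ + M * T * K₁ + M * Real.sqrt T * K₂) := by
  rw [integral_inner_map_eq_smul_of_skew hskew hε.ne' hT hU hQ hU'' hLUc hNc hVc, abs_mul,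
    abs_of_pos hε]
  gcongr
  have hT₀ : (0 : ℝ) ∈ Icc 0 T := left_mem_Icc.2 hT
  have hT₁ : T ∈ Icc 0 T := right_mem_Icc.2 hT
  have hend₁ := abs_inner_le_mul_of_norm_le (hUbd T hT₁) (hK₁ T hT₁)
  have hend₀ := abs_inner_le_mul_of_norm_le (hUbd 0 hT₀) (hK₁ 0 hT₀)
  have hUV : |∫ t in (0:ℝ)..T, ⟪U t, V t⟫| ≤ M * √T * K₂ :=
    (abs_integral_inner_le_mul_sqrt hT hUbd hVc).trans <| by
      rw [sub_zero, ← mul_assoc]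
      gcongr
  have hNU'' : ‖∫ t in (0:ℝ)..T, ⟪N t, U'' t⟫‖ ≤ M * K₁ * |T - 0| :=
    norm_integral_le_of_norm_le_const fun t ht =>
      have ht' : t ∈ Icc 0 T := Ioc_subset_Icc_self (uIoc_of_le hT ▸ ht)
      abs_inner_le_mul_of_norm_le (hNbd t ht') (hK₁ t ht')
  rw [Real.norm_eq_abs, sub_zero, abs_of_nonneg hT] at hNU''
  rw [abs_le] at hend₁ hend₀ hUV hNU'' ⊢
  constructor <;> linarith

/-- Abstract weak* convergence: if the fast component `U^Q` has the same `L`-image as a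
solution `U` of `∂_t U + N = −(1/ε) L U` (`L` skew-adjoint), then testing `U^Q` against
test functions of the form `U' = L U''` gains a factor `ε`:
`|∫₀ᵀ ⟨U^Q, L U''⟩ dt| ≤ ε (2MK₁ + MTK₁ + M√T K₂)`. -/
theorem stmt13 {H : Type*} [NormedAddCommGroup H] [InnerProductSpace ℝ H]
    [CompleteSpace H]
    (L : H →ₗ[ℝ] H) (hskew : ∀ x y : H, (inner ℝ (L x) y : ℝ) = -inner ℝ x (L y))
    (T ε M K₁ K₂ : ℝ) (hT : 0 ≤ T) (hε : 0 < ε) (hM : 0 ≤ M)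
    (U N UQ U'' V : ℝ → H)
    -- `U` solves `∂_t U + N = −(1/ε) L U`
    (hU : ∀ t ∈ Icc 0 T, HasDerivAt U (-(ε⁻¹ • L (U t)) - N t) t)
    (hUbd : ∀ t ∈ Icc 0 T, ‖U t‖ ≤ M) (hNbd : ∀ t ∈ Icc 0 T, ‖N t‖ ≤ M)
    -- `U^Q` has the same `L`-image as `U`
    (hQ : ∀ t ∈ Icc 0 T, L (UQ t) = L (U t))
    -- `U''` is `C¹` with derivative `V`, and the test function is `U' = L U''`
    (hU'' : ∀ t ∈ Icc 0 T, HasDerivAt U'' (V t) t)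
    (hK₁ : ∀ t ∈ Icc 0 T, ‖U'' t‖ ≤ K₁)
    (hK₂ : Real.sqrt (∫ t in (0:ℝ)..T, ‖V t‖ ^ 2) ≤ K₂)
    -- continuity (regularity) assumptions
    (hUc : ContinuousOn U (Icc 0 T)) (hNc : ContinuousOn N (Icc 0 T))
    (hUQc : ContinuousOn UQ (Icc 0 T)) (hVc : ContinuousOn V (Icc 0 T))
    (hLUc : ContinuousOn (fun t => L (U t)) (Icc 0 T))
    (hLU''c : ContinuousOn (fun t => L (U'' t)) (Icc 0 T)) :
    |∫ t in (0:ℝ)..T, (inner ℝ (UQ t) (L (U'' t)) : ℝ)|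
      ≤ ε * (2 * M * K₁ + M * T * K₁ + M * Real.sqrt T * K₂) :=
  stmt13_general L hskew T ε M K₁ K₂ hT hε hM U N UQ U'' V hU hUbd hNbd hQ hU'' hK₁ hK₂ hNc hVc hLUc
end
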